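/- arXiv:1701.00018 — 3 statements merged into one kernel-verified Lean document; each statement's English description precedes it below -/
import Mathlib

section
/- With Q^{-1}(x,y) = 2·1_{x=y-1} - 1_{x=y} and Q_ext^{(n)}(y1,y2) = (y1-y2-1)_{n-1} / (2^{y1-y2}(n-1)!), one has Q^{-1} Q_ext^{(n)} = Q_ext^{(n)} Q^{-1} = Q_ext^{(n-1)} for all n >= 2, while Q^{-1} Q_ext^{(1)} = Q_ext^{(1)} Q^{-1} = 0. -/
open scoped BigOperators

/-- The kernel `Q^{-1}(x,y) = 2·1_{x=y-1} - 1_{x=y}`. -/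
noncomputable def Qinv : ℤ → ℤ → ℝ :=
  fun x y => 2 * (if x = y - 1 then 1 else 0) - (if x = y then 1 else 0)

/-- Composition of kernels on `ℤ`. -/
noncomputable def kcomp (A B : ℤ → ℤ → ℝ) : ℤ → ℤ → ℝ := fun x y => ∑' z : ℤ, A x z * B z y

/-- The extended kernel
`Q_ext^{(n)}(y₁,y₂) = (y₁-y₂-1)_{n-1} / (2^{y₁-y₂} (n-1)!)`. -/
noncomputable def Qext (n : ℕ) : ℤ → ℤ → ℝ := fun y1 y2 =>
  (∏ i ∈ Finset.range (n - 1), ((y1 - y2 - 1 - (i : ℤ) : ℤ) : ℝ)) /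
    ((2 : ℝ) ^ (y1 - y2) * ((n - 1).factorial : ℝ))

/-!
Composing with `Q⁻¹` on the left acts as `B ↦ 2 B(x+1, ·) - B(x, ·)`, and on the right as
`A ↦ 2 A(·, y-1) - A(·, y)`. Since `Q_ext⁽ⁿ⁾(x, y)` depends only on `d = x - y`, both become
the same difference operator in `d`: the factor `2^{-d}` absorbs the `2`, and the forward
difference of falling factorials `(d)_{k+1} - (d-1)_{k+1} = (k+1) (d-1)_k` lowers `n` by one
(for `n = 1` the falling factorial is `1` and the difference vanishes).
-/

open Finset

open Polynomial in
lemma descPochhammer_succ_eval_add_one_sub {R : Type*} [CommRing R] (k : ℕ) (d : R) :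
    (descPochhammer R (k + 1)).eval (d + 1) - (descPochhammer R (k + 1)).eval d =
      (k + 1) * (descPochhammer R k).eval d := by
  rw [descPochhammer_succ_eval k d, descPochhammer_succ_left]
  simp only [eval_mul, eval_X, eval_comp, eval_sub, eval_one, add_sub_cancel_right]
  ring

lemma Qinv_of_eq_sub_one {x y : ℤ} (h : x = y - 1) : Qinv x y = 2 := by
  simp [Qinv, h]

lemma Qinv_self (x : ℤ) : Qinv x x = -1 := by
  simp [Qinv, show x ≠ x - 1 by omega]

lemma Qinv_of_ne {x y : ℤ} (h₁ : x ≠ y - 1) (h₂ : x ≠ y) : Qinv x y = 0 := by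
  simp [Qinv, h₁, h₂]

lemma kcomp_Qinv_left (B : ℤ → ℤ → ℝ) (x y : ℤ) :
    kcomp Qinv B x y = 2 * B (x + 1) y - B x y := by
  rw [kcomp, tsum_eq_sum (s := {x + 1, x}), sum_pair (by omega), Qinv_self,
    Qinv_of_eq_sub_one (by ring : x = x + 1 - 1)]
  · ring
  · intro z hz
    simp only [mem_insert, mem_singleton, not_or] at hz
    rw [Qinv_of_ne (by omega) (Ne.symm hz.2), zero_mul]

lemma kcomp_Qinv_right (A : ℤ → ℤ → ℝ) (x y : ℤ) :
    kcomp A Qinv x y = 2 * A x (y - 1) - A x y := by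
  rw [kcomp, tsum_eq_sum (s := {y - 1, y}), sum_pair (by omega),
    Qinv_of_eq_sub_one rfl, Qinv_self]
  · ring
  · intro z hz
    simp only [mem_insert, mem_singleton, not_or] at hz
    rw [Qinv_of_ne hz.1 hz.2, mul_zero]

lemma Qext_sub_one_right (n : ℕ) (x y : ℤ) : Qext n x (y - 1) = Qext n (x + 1) y := by
  rw [Qext, Qext, show x - (y - 1) = x + 1 - y by ring]

lemma two_mul_Qext_one_add_one_sub (x y : ℤ) : 2 * Qext 1 (x + 1) y - Qext 1 x y = 0 := by
  simp [Qext, show x + 1 - y = x - y + 1 by ring, zpow_add_one₀ (two_ne_zero (α := ℝ))]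

lemma two_mul_Qext_add_one_sub (m : ℕ) (x y : ℤ) :
    2 * Qext (m + 2) (x + 1) y - Qext (m + 2) x y = Qext (m + 1) x y := by
  have hdiff := descPochhammer_succ_eval_add_one_sub m ((x : ℝ) - y - 1)
  simp only [descPochhammer_eval_eq_prod_range, sub_add_cancel] at hdiff
  simp only [Qext, show m + 2 - 1 = m + 1 by omega, Nat.add_sub_cancel, Nat.factorial_succ,
    show x + 1 - y = x - y + 1 by ring, zpow_add_one₀ (two_ne_zero (α := ℝ))]
  push_cast at hdiff ⊢
  simp only [add_sub_cancel_right]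
  field_simp
  linear_combination hdiff

/-- `Q^{-1} Q_ext^{(n)} = Q_ext^{(n)} Q^{-1} = Q_ext^{(n-1)}` for `n ≥ 2`,
while `Q^{-1} Q_ext^{(1)} = Q_ext^{(1)} Q^{-1} = 0`. -/
theorem Qinv_Qext :
    (∀ n : ℕ, 2 ≤ n → ∀ x y : ℤ,
      kcomp Qinv (Qext n) x y = Qext (n - 1) x y ∧
      kcomp (Qext n) Qinv x y = Qext (n - 1) x y) ∧
    (∀ x y : ℤ, kcomp Qinv (Qext 1) x y = 0 ∧ kcomp (Qext 1) Qinv x y = 0) := by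
  refine ⟨fun n hn x y => ?_, fun x y => ?_⟩
  · obtain ⟨m, rfl⟩ : ∃ m, n = m + 2 := ⟨n - 2, by omega⟩
    rw [kcomp_Qinv_left, kcomp_Qinv_right, Qext_sub_one_right, two_mul_Qext_add_one_sub]
    exact ⟨rfl, rfl⟩
  · rw [kcomp_Qinv_left, kcomp_Qinv_right, Qext_sub_one_right, two_mul_Qext_one_add_one_sub]
    exact ⟨rfl, rfl⟩
end

section
/- Fix integers 0 <= k < n and strictly decreasing initial positions X_0(1) > X_0(2) > ... > X_0(n). There exists a unique function h : {0,1,...,k} x Z -> R satisfying: (i) (Q*)^{-1} h(ℓ, ·) = h(ℓ+1, ·) for all 0 <= ℓ < k, where (Q*)^{-1}(x,y) = 2·1_{x=y+1} - 1_{x=y}; (ii) h(k, z) = 2^{z - X_0(n-k)} for all z in Z; (iii) h(ℓ, X_0(n-k)) = 0 for all 0 <= ℓ < k. -/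
/-- Values of the solution at `x0 + m`. -/
private noncomputable def bhP (x0 : ℤ) (u : ℤ → ℝ) (m : ℕ) : ℝ :=
  Nat.rec 0 (fun m prev => (u (x0 + m) + prev) / 2) m

private lemma bhP_zero (x0 : ℤ) (u : ℤ → ℝ) : bhP x0 u 0 = 0 := rfl

private lemma bhP_succ (x0 : ℤ) (u : ℤ → ℝ) (m : ℕ) :
    bhP x0 u (m + 1) = (u (x0 + m) + bhP x0 u m) / 2 := rfl

/-- Values of the solution at `x0 - m`. -/
private noncomputable def bhN (x0 : ℤ) (u : ℤ → ℝ) (m : ℕ) : ℝ :=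
  Nat.rec 0 (fun m prev => 2 * prev - u (x0 - (m + 1))) m

private lemma bhN_zero (x0 : ℤ) (u : ℤ → ℝ) : bhN x0 u 0 = 0 := rfl

private lemma bhN_succ (x0 : ℤ) (u : ℤ → ℝ) (m : ℕ) :
    bhN x0 u (m + 1) = 2 * bhN x0 u m - u (x0 - (m + 1)) := rfl

/-- The unique `f` with `f x0 = 0` and `2 f(z+1) - f z = u z`. -/
private noncomputable def bhSolve (x0 : ℤ) (u : ℤ → ℝ) (z : ℤ) : ℝ :=
  if 0 ≤ z - x0 then bhP x0 u (z - x0).toNat else bhN x0 u (x0 - z).toNat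

private lemma bhSolve_x0 (x0 : ℤ) (u : ℤ → ℝ) : bhSolve x0 u x0 = 0 := by
  simp [bhSolve, bhP_zero]

private lemma bhSolve_eq (x0 : ℤ) (u : ℤ → ℝ) (z : ℤ) :
    2 * bhSolve x0 u (z + 1) - bhSolve x0 u z = u z := by
  by_cases hz : 0 ≤ z - x0
  · have h1 : 0 ≤ z + 1 - x0 := by omega
    have h2 : (z + 1 - x0).toNat = (z - x0).toNat + 1 := by omega
    have h3 : x0 + ((z - x0).toNat : ℤ) = z := by omega
    rw [bhSolve, bhSolve, if_pos hz, if_pos h1, h2, bhP_succ, h3]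
    ring
  · have h1 : (x0 - z).toNat = (x0 - (z + 1)).toNat + 1 := by omega
    have h2 : x0 - (((x0 - (z + 1)).toNat : ℤ) + 1) = z := by omega
    have h3 : bhSolve x0 u (z + 1) = bhN x0 u (x0 - (z + 1)).toNat := by
      by_cases hz1 : 0 ≤ z + 1 - x0
      · have he : z + 1 = x0 := by omega
        have h4 : (x0 - (z + 1)).toNat = 0 := by omega
        rw [bhSolve, if_pos hz1, h4, bhN_zero, show (z + 1 - x0).toNat = 0 by omega,
          bhP_zero]
      · rw [bhSolve, if_neg hz1]
    rw [h3, bhSolve, if_neg hz, h1, bhN_succ]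
    push_cast at h2
    rw [h2]
    ring

private lemma bhSolve_unique (x0 : ℤ) (u : ℤ → ℝ) (f : ℤ → ℝ) (hf0 : f x0 = 0)
    (hf : ∀ z : ℤ, 2 * f (z + 1) - f z = u z) (z : ℤ) : f z = bhSolve x0 u z := by
  have hP : ∀ m : ℕ, f (x0 + m) = bhP x0 u m := by
    intro m
    induction m with
    | zero => simpa [bhP_zero] using hf0
    | succ m ih =>
      have h := hf (x0 + m)
      have hx : x0 + ((m + 1 : ℕ) : ℤ) = (x0 + m) + 1 := by push_cast; ring
      rw [hx, bhP_succ, ← ih]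
      linarith
  have hN : ∀ m : ℕ, f (x0 - m) = bhN x0 u m := by
    intro m
    induction m with
    | zero => simpa [bhN_zero] using hf0
    | succ m ih =>
      have h := hf (x0 - ((m : ℤ) + 1))
      have hx : x0 - ((m : ℤ) + 1) + 1 = x0 - m := by ring
      rw [hx] at h
      have hx2 : x0 - ((m + 1 : ℕ) : ℤ) = x0 - ((m : ℤ) + 1) := by push_cast; ring
      rw [hx2, bhN_succ, ← ih, show ((m : ℤ) + 1) = ((m : ℕ) + 1 : ℤ) by push_cast; ring]
      push_cast
      linarith
  by_cases hz : 0 ≤ z - x0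
  · have h3 : x0 + ((z - x0).toNat : ℤ) = z := by omega
    rw [bhSolve, if_pos hz, ← hP, h3]
  · have h3 : x0 - ((x0 - z).toNat : ℤ) = z := by omega
    rw [bhSolve, if_neg hz, ← hN, h3]

/-- existence and uniqueness of the solution of the initial–boundary value
problem for the backwards discrete heat equation: `(Q*)^{-1} h(ℓ,·) = h(ℓ+1,·)` for
`0 ≤ ℓ < k` (where `((Q*)^{-1} f)(x) = 2 f(x+1) - f(x)`), with `h(k,z) = 2^{z - X₀(n-k)}`
and `h(ℓ, X₀(n-k)) = 0` for `0 ≤ ℓ < k`. -/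
theorem backwards_heat_existence_uniqueness (n k : ℕ) (hk : k < n) (X : ℕ → ℤ)
    (hX : ∀ i j : ℕ, 1 ≤ i → i < j → j ≤ n → X j < X i) :
    ∃ h : ℕ → ℤ → ℝ,
      ((∀ ℓ : ℕ, ℓ < k → ∀ z : ℤ, 2 * h ℓ (z + 1) - h ℓ z = h (ℓ + 1) z) ∧
        (∀ z : ℤ, h k z = (2 : ℝ) ^ (z - X (n - k))) ∧
        (∀ ℓ : ℕ, ℓ < k → h ℓ (X (n - k)) = 0)) ∧
      ∀ h' : ℕ → ℤ → ℝ,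
        ((∀ ℓ : ℕ, ℓ < k → ∀ z : ℤ, 2 * h' ℓ (z + 1) - h' ℓ z = h' (ℓ + 1) z) ∧
          (∀ z : ℤ, h' k z = (2 : ℝ) ^ (z - X (n - k))) ∧
          (∀ ℓ : ℕ, ℓ < k → h' ℓ (X (n - k)) = 0)) →
        ∀ ℓ : ℕ, ℓ ≤ k → ∀ z : ℤ, h' ℓ z = h ℓ z := by
  set x0 : ℤ := X (n - k) with hx0
  -- build levels downward: g 0 = level k, g m = level (k - m)
  let g : ℕ → ℤ → ℝ := fun m => Nat.rec (fun z => (2 : ℝ) ^ (z - x0))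
    (fun _ prev => bhSolve x0 prev) m
  have hg0 : ∀ z : ℤ, g 0 z = (2 : ℝ) ^ (z - x0) := fun z => rfl
  have hgS : ∀ m : ℕ, g (m + 1) = bhSolve x0 (g m) := fun m => rfl
  refine ⟨fun ℓ => g (k - ℓ), ⟨?_, ?_, ?_⟩, ?_⟩
  · intro ℓ hℓ z
    show 2 * g (k - ℓ) (z + 1) - g (k - ℓ) z = g (k - (ℓ + 1)) z
    have h1 : k - ℓ = (k - (ℓ + 1)) + 1 := by omega
    rw [h1, hgS]
    exact bhSolve_eq x0 (g (k - (ℓ + 1))) z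
  · intro z
    show g (k - k) z = (2 : ℝ) ^ (z - x0)
    rw [Nat.sub_self]
    exact hg0 z
  · intro ℓ hℓ
    show g (k - ℓ) x0 = 0
    have h1 : k - ℓ = (k - (ℓ + 1)) + 1 := by omega
    rw [h1, hgS]
    exact bhSolve_x0 x0 _
  · rintro h' ⟨heq, hinit, hbd⟩
    have key : ∀ m : ℕ, m ≤ k → ∀ z : ℤ, h' (k - m) z = g m z := by
      intro m
      induction m with
      | zero =>
        intro _ z
        rw [Nat.sub_zero, hinit z, hg0]
      | succ m ih =>
        intro hm z
        have hℓ : k - (m + 1) < k := by omega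
        have hstep : k - (m + 1) + 1 = k - m := by omega
        have h1 : ∀ w : ℤ, 2 * h' (k - (m + 1)) (w + 1) - h' (k - (m + 1)) w = g m w := by
          intro w
          rw [heq _ hℓ w, hstep]
          exact ih (by omega) w
        rw [hgS]
        exact bhSolve_unique x0 (g m) _ (hbd _ hℓ) h1 z
    intro ℓ hℓ z
    show h' ℓ z = g (k - ℓ) z
    have h2 := key (k - ℓ) (by omega) z
    rwa [show k - (k - ℓ) = ℓ by omega] at h2
end

section
/- Let Ai denote the Airy function, satisfying |Ai(z)| <= C_0 e^{-(2/3) z^{3/2}} for z >= 0 and |Ai(z)| <= C_0 for z < 0, and for t > 0, x, z in R define S_{t,x}(z) = (t/2)^{-1/3} exp( (2x^3)/(3(t/2)^2) + (2 z x)/t ) · Ai( (t/2)^{-1/3} z + (t/2)^{-4/3} x^2 ). Then for every t > 0, x in R, γ in R with γ + 2x/t > 0, the integral ∫_{-∞}^{∞} e^{2γ u} S_{t,x}(u)^2 du is finite. -/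
set_option maxHeartbeats 1000000


open MeasureTheory

private lemma exp_mul_integrableOn_Iic {b : ℝ} (hb : 0 < b) (a : ℝ) :
    IntegrableOn (fun x : ℝ => Real.exp (b * x)) (Set.Iic a) := by
  refine integrableOn_Iic_of_intervalIntegral_norm_bounded (Real.exp (b * a) / b) a
    (fun y => ((Real.continuous_exp.comp (continuous_const.mul continuous_id)).integrableOn_Ioc))
    Filter.tendsto_id (Filter.Eventually.of_forall fun y => ?_)
  have hnorm : ∀ x : ℝ, ‖Real.exp (b * x)‖ = Real.exp (b * x) := fun x =>
    Real.norm_of_nonneg (Real.exp_pos _).le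
  simp_rw [hnorm]
  rw [intervalIntegral.integral_comp_mul_left (fun s => Real.exp s) hb.ne',
    integral_exp]
  rw [smul_eq_mul]
  rw [div_eq_mul_inv, mul_comm (Real.exp (b * a)) b⁻¹]
  have hbinv : (0:ℝ) ≤ b⁻¹ := (inv_pos.mpr hb).le
  have h2 : 0 ≤ b⁻¹ * Real.exp (b * id y) := mul_nonneg hbinv (Real.exp_pos _).le
  nlinarith [h2]

private lemma key_est {a d u : ℝ} (ha : 0 < a) (hd : 0 < d) (hu : 0 < u) :
    a * u - d * u ^ ((3:ℝ)/2) ≤ (a + 1) * ((a + 1) / d) ^ 2 - u := by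
  have h5 : 0 ≤ u ^ ((3:ℝ)/2) := Real.rpow_nonneg hu.le _
  have hu32 : u ^ ((3:ℝ)/2) = u * Real.sqrt u := by
    have h32 : ((3:ℝ)/2) = 1 + (1:ℝ)/2 := by norm_num
    rw [h32, Real.rpow_add hu, Real.rpow_one, Real.sqrt_eq_rpow]
  rcases le_or_gt u (((a + 1) / d) ^ 2) with hcase | hcase
  · have h0 : (0:ℝ) < a + 1 := by linarith
    have h6 : (a + 1) * u ≤ (a + 1) * ((a + 1) / d) ^ 2 :=
      mul_le_mul_of_nonneg_left hcase h0.le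
    have h8 : 0 ≤ d * u ^ ((3:ℝ)/2) := mul_nonneg hd.le h5
    linarith
  · have hsq : (a + 1) / d ≤ Real.sqrt u := by
      rw [Real.le_sqrt (by positivity) hu.le]
      exact hcase.le
    have h7 : (a + 1) * u ≤ d * u ^ ((3:ℝ)/2) := by
      rw [hu32]
      have hds : a + 1 ≤ d * Real.sqrt u := by
        calc a + 1 = d * ((a + 1) / d) := by field_simp
        _ ≤ d * Real.sqrt u := mul_le_mul_of_nonneg_left hsq hd.le
      nlinarith [mul_le_mul_of_nonneg_right hds hu.le]
    have hAnn : (0:ℝ) ≤ (a + 1) * ((a + 1) / d) ^ 2 := by positivity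
    linarith

/-- with `Ai` the Airy function (with its standard decay bounds) and
`S_{t,x}(z) = (t/2)^(-1/3) exp(2x³/(3(t/2)²) + 2zx/t) Ai((t/2)^(-1/3) z + (t/2)^(-4/3) x²)`,
for every `t > 0`, `x ∈ ℝ` and `γ` with `γ + 2x/t > 0`, the integral
`∫ e^{2γu} S_{t,x}(u)² du` is finite. -/
theorem airy_kernel_exp_square_integrable
    (Ai : ℝ → ℝ) (hAiCont : Continuous Ai) (C₀ : ℝ)
    (hAi₁ : ∀ z : ℝ, 0 ≤ z → |Ai z| ≤ C₀ * Real.exp (-(2 / 3) * z ^ ((3 : ℝ) / 2)))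
    (hAi₂ : ∀ z : ℝ, z < 0 → |Ai z| ≤ C₀)
    (t x γ : ℝ) (ht : 0 < t) (hγ : 0 < γ + 2 * x / t) :
    Integrable (fun u : ℝ =>
      Real.exp (2 * γ * u) *
        ((t / 2) ^ (-(1 : ℝ) / 3) *
            Real.exp (2 * x ^ 3 / (3 * (t / 2) ^ 2) + 2 * u * x / t) *
            Ai ((t / 2) ^ (-(1 : ℝ) / 3) * u + (t / 2) ^ (-(4 : ℝ) / 3) * x ^ 2)) ^ 2) := by
  have ht2 : (0:ℝ) < t / 2 := by linarith
  set c : ℝ := (t / 2) ^ (-(1 : ℝ) / 3) with hc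
  set b : ℝ := (t / 2) ^ (-(4 : ℝ) / 3) * x ^ 2 with hbdef
  set E : ℝ := 2 * x ^ 3 / (3 * (t / 2) ^ 2) with hEdef
  set α : ℝ := 2 * γ + 4 * x / t with hαdef
  have hcpos : 0 < c := Real.rpow_pos_of_pos ht2 _
  have hbnn : 0 ≤ b := mul_nonneg (Real.rpow_pos_of_pos ht2 _).le (sq_nonneg x)
  have hα : 0 < α := by
    have h2 : α = 2 * (γ + 2 * x / t) := by rw [hαdef]; ring
    rw [h2]; linarith
  have hC₀ : 0 ≤ C₀ := le_trans (abs_nonneg _) (hAi₂ (-1) (by norm_num))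
  -- Ai is globally bounded by C₀
  have hAibd : ∀ z : ℝ, |Ai z| ≤ C₀ := by
    intro z
    rcases lt_or_ge z 0 with h | h
    · exact hAi₂ z h
    · refine (hAi₁ z h).trans ?_
      have h1 : Real.exp (-(2 / 3) * z ^ ((3 : ℝ) / 2)) ≤ 1 := by
        apply Real.exp_le_one_iff.mpr
        have := Real.rpow_nonneg h ((3:ℝ)/2)
        nlinarith
      nlinarith
  set f : ℝ → ℝ := fun u =>
      Real.exp (2 * γ * u) *
        (c * Real.exp (E + 2 * u * x / t) * Ai (c * u + b)) ^ 2 with hfdef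
  have hexp2 : ∀ s : ℝ, Real.exp s ^ 2 = Real.exp (2 * s) := by
    intro s; rw [sq, ← Real.exp_add]; ring_nf
  have hfval : ∀ u : ℝ, f u =
      (c ^ 2 * Real.exp (2 * E)) * (Real.exp (α * u) * (Ai (c * u + b)) ^ 2) := by
    intro u
    have step1 : f u = c ^ 2 * (Real.exp (2 * γ * u) * Real.exp (2 * (E + 2 * u * x / t)))
        * (Ai (c * u + b)) ^ 2 := by
      rw [hfdef]; simp only [mul_pow, hexp2]; ring
    have harg : 2 * γ * u + 2 * (E + 2 * u * x / t) = 2 * E + α * u := by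
      rw [hαdef]; field_simp; ring
    rw [step1, ← Real.exp_add, harg, Real.exp_add]; ring
  have hfcont : Continuous f := by
    apply Continuous.mul
    · exact Real.continuous_exp.comp (by continuity)
    · apply Continuous.pow
      exact ((continuous_const.mul (Real.continuous_exp.comp (by continuity))).mul
        (hAiCont.comp (by continuity)))
  set K : ℝ := c ^ 2 * Real.exp (2 * E) * C₀ ^ 2 with hKdef
  have hKnn : 0 ≤ K := by positivity
  have hfnonneg : ∀ u : ℝ, 0 ≤ f u := by
    intro u; rw [hfval u]; positivity
  -- global bound
  have hglobal : ∀ u : ℝ, f u ≤ K * Real.exp (α * u) := by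
    intro u
    rw [hfval u, hKdef]
    have h1 : (Ai (c * u + b)) ^ 2 ≤ C₀ ^ 2 := by
      have := hAibd (c * u + b)
      nlinarith [abs_nonneg (Ai (c * u + b)), sq_abs (Ai (c * u + b))]
    have he := (Real.exp_pos (α * u)).le
    calc c ^ 2 * Real.exp (2 * E) * (Real.exp (α * u) * Ai (c * u + b) ^ 2)
        ≤ c ^ 2 * Real.exp (2 * E) * (Real.exp (α * u) * C₀ ^ 2) := by
          apply mul_le_mul_of_nonneg_left (mul_le_mul_of_nonneg_left h1 he) (by positivity)
      _ = c ^ 2 * Real.exp (2 * E) * C₀ ^ 2 * Real.exp (α * u) := by ring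
  -- integrability on Iic 0
  have h1 : IntegrableOn f (Set.Iic 0) := by
    refine Integrable.mono' ((exp_mul_integrableOn_Iic hα 0).const_mul K)
      hfcont.aestronglyMeasurable (Filter.Eventually.of_forall fun u => ?_)
    rw [Real.norm_of_nonneg (hfnonneg u)]
    exact hglobal u
  -- on Ioi 0 : superexponential decay
  set d : ℝ := (4 / 3) * c ^ ((3:ℝ)/2) with hddef
  have hd : 0 < d := by
    have := Real.rpow_pos_of_pos hcpos ((3:ℝ)/2)
    rw [hddef]; positivity
  set A : ℝ := (α + 1) * ((α + 1) / d) ^ 2 with hAdef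
  have hbound2 : ∀ u : ℝ, 0 < u → f u ≤ (K * Real.exp A) * Real.exp (-1 * u) := by
    intro u hu
    rw [hfval u]
    have hz : 0 ≤ c * u + b := by positivity
    have hAi : |Ai (c * u + b)| ≤ C₀ * Real.exp (-(2 / 3) * (c * u + b) ^ ((3 : ℝ) / 2)) :=
      hAi₁ _ hz
    have hAisq : (Ai (c * u + b)) ^ 2 ≤
        C₀ ^ 2 * Real.exp (-(4 / 3) * (c * u + b) ^ ((3 : ℝ) / 2)) := by
      have h2 : (Ai (c * u + b)) ^ 2 = |Ai (c * u + b)| ^ 2 := (sq_abs _).symm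
      have h3 : |Ai (c * u + b)| ^ 2 ≤
          (C₀ * Real.exp (-(2 / 3) * (c * u + b) ^ ((3 : ℝ) / 2))) ^ 2 :=
        pow_le_pow_left₀ (abs_nonneg _) hAi 2
      rw [h2]
      refine h3.trans ?_
      rw [mul_pow, hexp2]
      have : 2 * (-(2 / 3) * (c * u + b) ^ ((3 : ℝ) / 2))
          = -(4 / 3) * (c * u + b) ^ ((3 : ℝ) / 2) := by ring
      rw [this]
    -- (c u + b)^{3/2} ≥ c^{3/2} u^{3/2}
    have hmono : c ^ ((3:ℝ)/2) * u ^ ((3:ℝ)/2) ≤ (c * u + b) ^ ((3 : ℝ) / 2) := by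
      rw [← Real.mul_rpow hcpos.le hu.le]
      exact Real.rpow_le_rpow (by positivity) (by linarith) (by norm_num)
    have hkey : α * u - d * u ^ ((3:ℝ)/2) ≤ A - u := by
      rw [hAdef]; exact key_est hα hd hu
    have hexpchain : Real.exp (α * u) * Real.exp (-(4 / 3) * (c * u + b) ^ ((3 : ℝ) / 2))
        ≤ Real.exp A * Real.exp (-1 * u) := by
      rw [← Real.exp_add, ← Real.exp_add]
      apply Real.exp_le_exp.mpr
      have h9 : (4:ℝ) / 3 * (c ^ ((3:ℝ)/2) * u ^ ((3:ℝ)/2)) ≤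
          (4 / 3) * (c * u + b) ^ ((3 : ℝ) / 2) :=
        mul_le_mul_of_nonneg_left hmono (by norm_num)
      have hd' : d * u ^ ((3:ℝ)/2) = (4/3) * c ^ ((3:ℝ)/2) * u ^ ((3:ℝ)/2) := by
        rw [hddef]
      nlinarith
    have hepos := (Real.exp_pos (α * u)).le
    have hKexp : (0:ℝ) ≤ c ^ 2 * Real.exp (2 * E) := by positivity
    calc c ^ 2 * Real.exp (2 * E) * (Real.exp (α * u) * (Ai (c * u + b)) ^ 2)
        ≤ c ^ 2 * Real.exp (2 * E) *
          (Real.exp (α * u) * (C₀ ^ 2 * Real.exp (-(4 / 3) * (c * u + b) ^ ((3 : ℝ) / 2)))) := by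
          apply mul_le_mul_of_nonneg_left _ hKexp
          apply mul_le_mul_of_nonneg_left hAisq hepos
      _ = K * (Real.exp (α * u) * Real.exp (-(4 / 3) * (c * u + b) ^ ((3 : ℝ) / 2))) := by
          rw [hKdef]; ring
      _ ≤ K * (Real.exp A * Real.exp (-1 * u)) := by
          apply mul_le_mul_of_nonneg_left hexpchain hKnn
      _ = (K * Real.exp A) * Real.exp (-1 * u) := by ring
  have h2 : IntegrableOn f (Set.Ioi 0) := by
    refine Integrable.mono' ((exp_neg_integrableOn_Ioi 0 (one_pos)).const_mul (K * Real.exp A))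
      hfcont.aestronglyMeasurable ?_
    rw [ae_restrict_iff' measurableSet_Ioi]
    refine Filter.Eventually.of_forall fun u hu => ?_
    rw [Real.norm_of_nonneg (hfnonneg u)]
    exact hbound2 u hu
  have : IntegrableOn f Set.univ := by
    rw [← Set.Iic_union_Ioi (a := (0:ℝ)), integrableOn_union]
    exact ⟨h1, h2⟩
  rwa [integrableOn_univ] at this
end
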